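/- For every natural number m ≥ 1 and every real p > 0, ∫_0^1 |∑_{k=2^m}^{2^{m+1}-1} W_k(x)|^p dx = 2^{m(p-1)}. -/

import Mathlib

open MeasureTheory Filter

noncomputable def rademacher (n : ℕ) (x : ℝ) : ℝ :=
  Real.sign (Real.sin ((2:ℝ)^n * Real.pi * x))

noncomputable def walsh (n : ℕ) (x : ℝ) : ℝ :=
  ∏ i ∈ Finset.range (n+1), if n.testBit i then rademacher (i+1) x else 1

/-!
Splitting the indices `k < 2^(m+1)` by their top bit gives
`∑_{k < 2^m} W_k = ∏_{i < m} (1 + R_{i+1})`, and the block sum is `R_{m+1}` times this product.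
Off the (null) set of dyadic rationals every `R_n` is `±1`, so the product equals `2^m` on
`(0, 2^{-m})`, where all of `R_1, …, R_m` are `1`, and vanishes elsewhere in `(0, 1)`: if
`R_1, …, R_m` are all positive, then doubling `x` keeps it in `(0, 1/2)` `m` times, i.e.
`x < 2^{-m}`.
Hence `|∑_{k=2^m}^{2^{m+1}-1} W_k|^p = 2^{mp} · 1_{(0, 2^{-m})}` almost everywhere on `[0, 1]`.
-/

section Walsh

variable (x : ℝ)

lemma prod_range_ite_testBit_eq_of_lt_two_pow {M : Type*} [CommMonoid M] (f : ℕ → M)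
    {n N K : ℕ} (hn : n < 2 ^ N) (hNK : N ≤ K) :
    ∏ i ∈ Finset.range N, (if n.testBit i then f i else 1)
      = ∏ i ∈ Finset.range K, (if n.testBit i then f i else 1) := by
  refine Finset.prod_subset (Finset.range_subset_range.mpr hNK) fun i _ hi => ?_
  have hni : n < 2 ^ i :=
    hn.trans_le (Nat.pow_le_pow_right two_pos (not_lt.mp (Finset.mem_range.not.mp hi)))
  simp [Nat.testBit_eq_false_of_lt hni]

lemma walsh_eq_prod_range {n N : ℕ} (hn : n < 2 ^ N) :
    walsh n x = ∏ i ∈ Finset.range N, if n.testBit i then rademacher (i+1) x else 1 := by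
  rw [walsh, prod_range_ite_testBit_eq_of_lt_two_pow _ hn (le_max_left N (n + 1)),
    prod_range_ite_testBit_eq_of_lt_two_pow _
      (Nat.lt_two_pow_self.trans_le (Nat.pow_le_pow_right two_pos n.le_succ)) (le_max_right N _)]

lemma walsh_two_pow_add {m j : ℕ} (hj : j < 2 ^ m) :
    walsh (2 ^ m + j) x = rademacher (m+1) x * walsh j x := by
  have hlt : 2 ^ m + j < 2 ^ (m + 1) := by rw [pow_succ]; omega
  rw [walsh_eq_prod_range x hlt, walsh_eq_prod_range x hj, Finset.prod_range_succ, mul_comm,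
    Nat.testBit_two_pow_add_eq, Nat.testBit_eq_false_of_lt hj]
  refine congrArg _ (Finset.prod_congr rfl fun i hi => ?_)
  rw [Nat.testBit_two_pow_add_gt (Finset.mem_range.mp hi)]

lemma sum_walsh_Ico_two_pow (m : ℕ) :
    ∑ k ∈ Finset.Ico (2 ^ m) (2 ^ (m+1)), walsh k x
      = rademacher (m+1) x * ∑ j ∈ Finset.range (2 ^ m), walsh j x := by
  have hlen : 2 ^ (m + 1) - 2 ^ m = 2 ^ m := by rw [pow_succ]; omega
  rw [Finset.sum_Ico_eq_sum_range, hlen, Finset.mul_sum]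
  exact Finset.sum_congr rfl fun j hj => walsh_two_pow_add x (Finset.mem_range.mp hj)

lemma sum_walsh_range_two_pow (m : ℕ) :
    ∑ j ∈ Finset.range (2 ^ m), walsh j x
      = ∏ i ∈ Finset.range m, (1 + rademacher (i+1) x) := by
  induction m with
  | zero => simp [walsh]
  | succ m ih =>
    rw [← Finset.sum_range_add_sum_Ico _ (Nat.pow_le_pow_right two_pos m.le_succ),
      sum_walsh_Ico_two_pow, ih, Finset.prod_range_succ]
    ring

end Walsh

lemma rademacher_eq_one_of_two_pow_mul_lt_one {n : ℕ} {x : ℝ} (hx : 0 < x)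
    (h : (2:ℝ) ^ n * x < 1) : rademacher n x = 1 := by
  refine Real.sign_of_pos (Real.sin_pos_of_pos_of_lt_pi (by positivity) ?_)
  nlinarith [Real.pi_pos]

lemma rademacher_nonpos_of_half_le {i : ℕ} {x : ℝ} (h₁ : 1 / 2 ≤ (2:ℝ) ^ i * x)
    (h₂ : (2:ℝ) ^ i * x < 1) : rademacher (i+1) x ≤ 0 := by
  have hsin : Real.sin ((2:ℝ) ^ (i+1) * Real.pi * x) ≤ 0 := by
    rw [← Real.sin_sub_two_pi]
    apply Real.sin_nonpos_of_nonpos_of_neg_pi_le <;> rw [pow_succ] <;> nlinarith [Real.pi_pos]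
  rcases hsin.lt_or_eq with hneg | hzero
  · simp [rademacher, Real.sign_of_neg hneg]
  · simp [rademacher, hzero]

lemma two_pow_mul_lt_one_of_rademacher_pos {x : ℝ} (hx : x < 1) :
    ∀ m : ℕ, (∀ i < m, 0 < rademacher (i+1) x) → (2:ℝ) ^ m * x < 1
  | 0, _ => by simpa using hx
  | m + 1, h => by
    have hm : (2:ℝ) ^ m * x < 1 :=
      two_pow_mul_lt_one_of_rademacher_pos hx m fun i hi => h i (by omega)
    have hhalf : (2:ℝ) ^ m * x < 1 / 2 := by
      by_contra! hge
      exact (h m m.lt_succ_self).not_ge (rademacher_nonpos_of_half_le hge hm)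
    rw [pow_succ]
    linarith

lemma ae_rademacher_ne_zero (n : ℕ) : ∀ᵐ x : ℝ, rademacher n x ≠ 0 := by
  have hzeros : {x : ℝ | rademacher n x = 0} ⊆ Set.range fun k : ℤ => (k : ℝ) / 2 ^ n := by
    intro x hx
    obtain ⟨k, hk⟩ := Real.sin_eq_zero_iff.mp (Real.sign_eq_zero_iff.mp hx)
    refine ⟨k, ?_⟩
    field_simp
    nlinarith [Real.pi_pos]
  rw [ae_iff]
  simpa using ((Set.countable_range _).mono hzeros).measure_zero volume

lemma abs_sum_walsh_Ico_two_pow {x : ℝ} (hx₀ : 0 < x) (hx₁ : x < 1)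
    (hR : ∀ n, rademacher n x ≠ 0) (m : ℕ) :
    |∑ k ∈ Finset.Ico (2 ^ m) (2 ^ (m+1)), walsh k x|
      = (Set.Ioo 0 ((2:ℝ) ^ m)⁻¹).indicator (fun _ => (2:ℝ) ^ m) x := by
  have hunit : ∀ n, rademacher n x = -1 ∨ rademacher n x = 1 := fun n =>
    Real.sign_apply_eq_of_ne_zero _ (fun h => hR n (by simp [rademacher, h]))
  have habs : |rademacher (m+1) x| = 1 := by rcases hunit (m+1) with h | h <;> simp [h]
  rw [sum_walsh_Ico_two_pow, sum_walsh_range_two_pow, abs_mul, habs, one_mul]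
  have hmem_iff : x ∈ Set.Ioo 0 ((2:ℝ) ^ m)⁻¹ ↔ (2:ℝ) ^ m * x < 1 := by
    rw [Set.mem_Ioo, ← one_div, lt_div_iff₀' (by positivity), and_iff_right hx₀]
  by_cases hsmall : (2:ℝ) ^ m * x < 1
  · have hmem : x ∈ Set.Ioo 0 ((2:ℝ) ^ m)⁻¹ := hmem_iff.mpr hsmall
    have hfactor : ∀ i ∈ Finset.range m, 1 + rademacher (i+1) x = 2 := fun i hi => by
      rw [rademacher_eq_one_of_two_pow_mul_lt_one hx₀ (lt_of_le_of_lt (by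
        gcongr; exacts [by norm_num, Finset.mem_range.mp hi]) hsmall)]
      norm_num
    rw [Set.indicator_of_mem hmem, Finset.prod_congr rfl hfactor]
    simp
  · have hnotmem : x ∉ Set.Ioo 0 ((2:ℝ) ^ m)⁻¹ := hmem_iff.not.mpr hsmall
    obtain ⟨i, hi, hneg⟩ : ∃ i < m, ¬ 0 < rademacher (i+1) x := by
      by_contra! h
      exact hsmall (two_pow_mul_lt_one_of_rademacher_pos hx₁ m h)
    have hRi : rademacher (i+1) x = -1 :=
      (hunit (i+1)).resolve_right fun h => hneg (by rw [h]; exact one_pos)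
    rw [Set.indicator_of_notMem hnotmem,
      Finset.prod_eq_zero (Finset.mem_range.mpr hi) (by rw [hRi]; norm_num), abs_zero]

theorem walsh_block_sum_Lp_norm_general (m : ℕ) (p : ℝ) (hp : 0 < p) :
    ∫ x in Set.Icc (0:ℝ) 1, |∑ k ∈ Finset.Ico (2^m) (2^(m+1)), walsh k x| ^ p
      = (2:ℝ) ^ ((m:ℝ) * (p - 1)) := by
  have hpointwise : ∀ᵐ x : ℝ, x ∈ Set.Ioo (0:ℝ) 1 →
      |∑ k ∈ Finset.Ico (2^m) (2^(m+1)), walsh k x| ^ p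
        = (Set.Ioo 0 ((2:ℝ) ^ m)⁻¹).indicator (fun _ => ((2:ℝ) ^ m) ^ p) x := by
    filter_upwards [ae_all_iff.mpr ae_rademacher_ne_zero] with x hR hx
    rw [abs_sum_walsh_Ico_two_pow hx.1 hx.2 hR]
    by_cases hmem : x ∈ Set.Ioo 0 ((2:ℝ) ^ m)⁻¹
    · simp only [Set.indicator_of_mem hmem]
    · simp only [Set.indicator_of_notMem hmem, Real.zero_rpow hp.ne']
  have hsub : Set.Ioo 0 ((2:ℝ) ^ m)⁻¹ ⊆ Set.Ioo 0 1 :=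
    Set.Ioo_subset_Ioo_right (inv_le_one_of_one_le₀ (one_le_pow₀ one_le_two))
  rw [integral_Icc_eq_integral_Ioo, setIntegral_congr_ae measurableSet_Ioo hpointwise,
    setIntegral_indicator measurableSet_Ioo, Set.inter_eq_self_of_subset_right hsub,
    setIntegral_const, Real.volume_real_Ioo_of_le (by positivity), sub_zero, smul_eq_mul,
    ← Real.rpow_natCast, ← Real.rpow_neg zero_le_two, ← Real.rpow_mul zero_le_two,
    ← Real.rpow_add two_pos]
  ring_nf

theorem walsh_block_sum_Lp_norm (m : ℕ) (hm : 1 ≤ m) (p : ℝ) (hp : 0 < p) :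
    ∫ x in Set.Icc (0:ℝ) 1, |∑ k ∈ Finset.Ico (2^m) (2^(m+1)), walsh k x| ^ p
      = (2:ℝ) ^ ((m:ℝ) * (p - 1)) :=
  walsh_block_sum_Lp_norm_general m p hp
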